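/- For every strict partition γ, every n, and every T ∈ SSHT_n(γ) such that T has at least one entry equal to 1 and no entry equal to 2', the queer lowering operator f_0* applied to T (which changes the rightmost 1 in T to 2' if that cell is not on the main diagonal, and to 2 if it is on the main diagonal) yields a semistandard shifted tableau of shape γ, and its weight is obtained from wt(T) by decreasing the first part by 1 and increasing the second part by 1. -/

import Mathlib

/-! ## Strict partitions and shifted diagrams (French convention, 1-indexed).

A marked entry `i'` is encoded as `2*i - 1` and an unmarked entry `i` as `2*i`;
the value `0` denotes an empty cell / a cell outside the diagram.  The total
order `1' < 1 < 2' < 2 < ⋯` then coincides with the usual order on `ℕ`. -/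

/-- A strict partition: a strictly decreasing list of positive integers. -/
def StrictPartition (γ : List ℕ) : Prop :=
  γ.Chain' (· > ·) ∧ ∀ x ∈ γ, 0 < x

/-- The `r`-th part (1-indexed) of a partition given as a list. -/
def part (γ : List ℕ) (r : ℕ) : ℕ := γ.getD (r - 1) 0

/-- The cell `(r, c)` (row `r` indexed from the bottom, column `c`, both 1-indexed)
belongs to the shifted diagram of `γ`: row `r` has `γ_r` cells, with its leftmost
cell on the main diagonal `c = r`. -/
def ShiftedShape (γ : List ℕ) (rc : ℕ × ℕ) : Prop :=
  1 ≤ rc.1 ∧ rc.1 ≤ γ.length ∧ rc.1 ≤ rc.2 ∧ rc.2 < rc.1 + part γ rc.1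

instance (γ : List ℕ) (rc : ℕ × ℕ) : Decidable (ShiftedShape γ rc) := by
  unfold ShiftedShape; infer_instance

/-- A common bound for all row and column indices of cells of the (shifted) diagram. -/
def colBound (γ : List ℕ) : ℕ := γ.length + γ.foldr max 0

/-- The cells of the shifted diagram of `γ`, as a finite set. -/
def shapeCells (γ : List ℕ) : Finset (ℕ × ℕ) :=
  (Finset.range (colBound γ + 1) ×ˢ Finset.range (colBound γ + 1)).filter
    (fun rc => ShiftedShape γ rc)

/-- A semistandard shifted tableau of shape `γ` with entries in
`{1' < 1 < 2' < 2 < ⋯ < n' < n}` (encoded as `{1, 2, …, 2n}`): entries weakly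
increase along rows (eastward) and columns (northward, i.e. increasing row
index), with at most one unmarked `i` per column, at most one marked `i'` per
row, and no marked entries on the main diagonal. -/
structure SSHT (n : ℕ) (γ : List ℕ) where
  entry : ℕ × ℕ → ℕ
  zero_outside : ∀ rc, ¬ ShiftedShape γ rc → entry rc = 0
  pos : ∀ rc, ShiftedShape γ rc → 1 ≤ entry rc
  le_two_n : ∀ rc, ShiftedShape γ rc → entry rc ≤ 2 * n
  row_mono : ∀ r c c', c < c' → ShiftedShape γ (r, c) → ShiftedShape γ (r, c') →
    entry (r, c) ≤ entry (r, c')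
  col_mono : ∀ r r' c, r < r' → ShiftedShape γ (r, c) → ShiftedShape γ (r', c) →
    entry (r, c) ≤ entry (r', c)
  col_unmarked : ∀ r r' c, r < r' → ShiftedShape γ (r, c) → ShiftedShape γ (r', c) →
    entry (r, c) = entry (r', c) → entry (r, c) % 2 = 1
  row_marked : ∀ r c c', c < c' → ShiftedShape γ (r, c) → ShiftedShape γ (r, c') →
    entry (r, c) = entry (r, c') → entry (r, c) % 2 = 0
  diag_unmarked : ∀ r, ShiftedShape γ (r, r) → entry (r, r) % 2 = 0

/-- The weight of a filling of the shifted diagram of `γ`: `wtFun γ f k` is the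
number of cells whose entry equals `k` or `k'` (encoded `2k` or `2k-1`). -/
def wtFun (γ : List ℕ) (f : ℕ × ℕ → ℕ) (k : ℕ) : ℕ :=
  ((shapeCells γ).filter (fun rc => f rc = 2 * k - 1 ∨ f rc = 2 * k)).card

/-! ## The queer lowering operator `f_0*`. -/

/-- The cell of the rightmost unmarked entry `1` (encoded `2`) of `T`, if any. -/
def rightmostOne {n : ℕ} {γ : List ℕ} (T : SSHT n γ) : Option (ℕ × ℕ) :=
  (((List.range (colBound γ + 1)).flatMap (fun r =>
      (List.range (colBound γ + 1)).map (fun c => (r, c)))).filter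
    (fun rc => decide (ShiftedShape γ rc) && decide (T.entry rc = 2))).foldr
    (fun a b => match b with
      | none => some a
      | some b' => if b'.2 ≤ a.2 then some a else some b') none

/-- The queer lowering operator `f_0*`, described on underlying fillings:
`queerLowerFun T = none` when `f_0*(T) = 0` (no entry `1`, or some entry `2'`);
otherwise the rightmost `1` becomes `2'` off the main diagonal and `2` on it. -/
def queerLowerFun {n : ℕ} {γ : List ℕ} (T : SSHT n γ) : Option (ℕ × ℕ → ℕ) :=
  if ∃ rc ∈ shapeCells γ, T.entry rc = 3 then none
  else
    match rightmostOne T with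
    | none => none
    | some (r, c) =>
      some (fun rc => if rc = (r, c) then (if r = c then 4 else 3) else T.entry rc)

/-! Every entry strictly east of the rightmost `1` in its row, or strictly north of it in its
column, is at least `2`: it is at least `1`, it is not a `1` (rightmostness, resp. at most one
unmarked `1` per column) and it is not a `2'`. Every entry west or south of it is at most `1`.
So writing `2'` into that cell keeps all row and column conditions; on the main diagonal we
write `2` instead, which is harmless since a diagonal cell has no cell above it. Only this one
cell changes, which accounts for the weight. -/

lemma part_le_foldr_max (γ : List ℕ) (r : ℕ) : part γ r ≤ γ.foldr max 0 := by
  unfold part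
  rcases Nat.lt_or_ge (r - 1) γ.length with hlt | hge
  · rw [List.getD_eq_getElem _ _ hlt]
    exact List.le_max_of_le' 0 (List.getElem_mem _) le_rfl
  · rw [List.getD_eq_default _ _ hge]
    exact Nat.zero_le _

lemma ShiftedShape.lt_colBound {γ : List ℕ} {rc : ℕ × ℕ} (h : ShiftedShape γ rc) :
    rc.1 < colBound γ + 1 ∧ rc.2 < colBound γ + 1 := by
  have := part_le_foldr_max γ rc.1
  obtain ⟨-, h2, -, h4⟩ := h
  unfold colBound
  omega

lemma mem_shapeCells {γ : List ℕ} {rc : ℕ × ℕ} : rc ∈ shapeCells γ ↔ ShiftedShape γ rc := by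
  simp only [shapeCells, Finset.mem_filter, Finset.mem_product, Finset.mem_range,
    and_iff_right_iff_imp]
  exact ShiftedShape.lt_colBound

lemma card_filter_update {α β : Type*} [DecidableEq α] {s : Finset α} {p : α} (hp : p ∈ s)
    (P : β → Prop) [DecidablePred P] (f : α → β) (v : β) :
    (s.filter fun x => P (Function.update f p v x)).card + (if P (f p) then 1 else 0) =
      (s.filter fun x => P (f x)).card + (if P v then 1 else 0) := by
  have herase : ∑ x ∈ s.erase p, (if P (Function.update f p v x) then 1 else 0) =
      ∑ x ∈ s.erase p, (if P (f x) then 1 else 0) :=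
    Finset.sum_congr rfl fun x hx => by rw [Function.update_of_ne (Finset.ne_of_mem_erase hx)]
  rw [Finset.card_filter, Finset.card_filter, ← Finset.add_sum_erase s _ hp,
    ← Finset.add_sum_erase s _ hp, herase, Function.update_self]
  ring

def rightmostCell (l : List (ℕ × ℕ)) : Option (ℕ × ℕ) :=
  l.foldr (fun a b => match b with
      | none => some a
      | some b' => if b'.2 ≤ a.2 then some a else some b') none

lemma rightmostCell_spec {l : List (ℕ × ℕ)} (hl : l ≠ []) :
    ∃ a, rightmostCell l = some a ∧ a ∈ l ∧ ∀ b ∈ l, b.2 ≤ a.2 := by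
  induction l with
  | nil => exact absurd rfl hl
  | cons x t ih =>
    rcases eq_or_ne t [] with rfl | ht
    · exact ⟨x, rfl, by simp, by simp⟩
    obtain ⟨a, ha, hmem, hmax⟩ := ih ht
    have hcons : rightmostCell (x :: t) = if a.2 ≤ x.2 then some x else some a := by
      rw [rightmostCell, List.foldr_cons, ← rightmostCell, ha]
    by_cases hle : a.2 ≤ x.2
    · refine ⟨x, by rw [hcons, if_pos hle], List.mem_cons_self, ?_⟩
      rintro b (_ | ⟨_, hb⟩)
      exacts [le_rfl, (hmax b hb).trans hle]
    · refine ⟨a, by rw [hcons, if_neg hle], List.mem_cons_of_mem _ hmem, ?_⟩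
      rintro b (_ | ⟨_, hb⟩)
      exacts [by omega, hmax b hb]

namespace SSHT

variable {n : ℕ} {γ : List ℕ}

lemma rightmostOne_spec (T : SSHT n γ) (hone : ∃ rc ∈ shapeCells γ, T.entry rc = 2) :
    ∃ p, rightmostOne T = some p ∧ ShiftedShape γ p ∧ T.entry p = 2 ∧
      ∀ rc, ShiftedShape γ rc → T.entry rc = 2 → rc.2 ≤ p.2 := by
  set L := ((List.range (colBound γ + 1)).flatMap (fun r =>
      (List.range (colBound γ + 1)).map (fun c => (r, c)))).filter
    (fun rc => decide (ShiftedShape γ rc) && decide (T.entry rc = 2))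
  have hmemL : ∀ rc, rc ∈ L ↔ ShiftedShape γ rc ∧ T.entry rc = 2 := fun rc => by
    simp only [L, List.mem_filter, List.mem_flatMap, List.mem_map, List.mem_range,
      Bool.and_eq_true, decide_eq_true_eq, and_iff_right_iff_imp]
    exact fun ⟨hs, _⟩ => ⟨rc.1, hs.lt_colBound.1, rc.2, hs.lt_colBound.2, rfl⟩
  obtain ⟨rc₀, hrc₀, h₀⟩ := hone
  have hL : L ≠ [] := List.ne_nil_of_mem ((hmemL rc₀).2 ⟨mem_shapeCells.1 hrc₀, h₀⟩)
  obtain ⟨p, hp, hpL, hmax⟩ := rightmostCell_spec hL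
  obtain ⟨hps, hpe⟩ := (hmemL p).1 hpL
  exact ⟨p, hp, hps, hpe, fun rc hs he => hmax rc ((hmemL rc).2 ⟨hs, he⟩)⟩

def updateEntry (T : SSHT n γ) {r c v : ℕ} (hrc : ShiftedShape γ (r, c)) (hpos : 1 ≤ v)
    (hle : v ≤ 2 * n)
    (hleft : ∀ c', c' < c → ShiftedShape γ (r, c') → T.entry (r, c') < v)
    (hbelow : ∀ r', r' < r → ShiftedShape γ (r', c) → T.entry (r', c) < v)
    (hright : ∀ c', c < c' → ShiftedShape γ (r, c') →
      v < T.entry (r, c') ∨ v = T.entry (r, c') ∧ v % 2 = 0)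
    (habove : ∀ r', r < r' → ShiftedShape γ (r', c) →
      v < T.entry (r', c) ∨ v = T.entry (r', c) ∧ v % 2 = 1)
    (hdiag : r = c → v % 2 = 0) : SSHT n γ where
  entry := Function.update T.entry (r, c) v
  zero_outside rc h := by
    rw [Function.update_of_ne (by rintro rfl; exact h hrc), T.zero_outside rc h]
  pos rc h := by
    rw [Function.update_apply]; split_ifs
    exacts [hpos, T.pos rc h]
  le_two_n rc h := by
    rw [Function.update_apply]; split_ifs
    exacts [hle, T.le_two_n rc h]
  row_mono r₁ c₁ c₂ hc h₁ h₂ := by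
    simp only [Function.update_apply, Prod.mk.injEq]
    split_ifs with e₁ e₂ e₂
    · omega
    · obtain ⟨rfl, rfl⟩ := e₁; have := hright c₂ hc h₂; omega
    · obtain ⟨rfl, rfl⟩ := e₂; exact (hleft c₁ hc h₁).le
    · exact T.row_mono r₁ c₁ c₂ hc h₁ h₂
  col_mono r₁ r₂ c₁ hr h₁ h₂ := by
    simp only [Function.update_apply, Prod.mk.injEq]
    split_ifs with e₁ e₂ e₂
    · omega
    · obtain ⟨rfl, rfl⟩ := e₁; have := habove r₂ hr h₂; omega
    · obtain ⟨rfl, rfl⟩ := e₂; exact (hbelow r₁ hr h₁).le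
    · exact T.col_mono r₁ r₂ c₁ hr h₁ h₂
  col_unmarked r₁ r₂ c₁ hr h₁ h₂ := by
    simp only [Function.update_apply, Prod.mk.injEq]
    split_ifs with e₁ e₂ e₂
    · omega
    · obtain ⟨rfl, rfl⟩ := e₁; have := habove r₂ hr h₂; omega
    · obtain ⟨rfl, rfl⟩ := e₂; have := hbelow r₁ hr h₁; omega
    · exact T.col_unmarked r₁ r₂ c₁ hr h₁ h₂
  row_marked r₁ c₁ c₂ hc h₁ h₂ := by
    simp only [Function.update_apply, Prod.mk.injEq]
    split_ifs with e₁ e₂ e₂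
    · omega
    · obtain ⟨rfl, rfl⟩ := e₁; have := hright c₂ hc h₂; omega
    · obtain ⟨rfl, rfl⟩ := e₂; have := hleft c₁ hc h₁; omega
    · exact T.row_marked r₁ c₁ c₂ hc h₁ h₂
  diag_unmarked r₁ h := by
    simp only [Function.update_apply, Prod.mk.injEq]
    split_ifs with e
    exacts [hdiag (e.1.symm.trans e.2), T.diag_unmarked r₁ h]

section RightmostOne

variable (T : SSHT n γ) {r c : ℕ}

lemma four_le_entry_above_one (hs : ShiftedShape γ (r, c)) (hone : T.entry (r, c) = 2) {r' : ℕ}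
    (hr : r < r') (hs' : ShiftedShape γ (r', c)) (hne : T.entry (r', c) ≠ 3) :
    4 ≤ T.entry (r', c) := by
  have hmono := T.col_mono r r' c hr hs hs'
  have hstrict : T.entry (r', c) ≠ 2 := fun h =>
    absurd (T.col_unmarked r r' c hr hs hs' (by rw [hone, h])) (by rw [hone]; decide)
  omega

lemma four_le_entry_right_of_rightmost (hs : ShiftedShape γ (r, c)) (hone : T.entry (r, c) = 2)
    {c' : ℕ} (hc : c < c') (hs' : ShiftedShape γ (r, c')) (hne : T.entry (r, c') ≠ 3)
    (hmax : ∀ rc, ShiftedShape γ rc → T.entry rc = 2 → rc.2 ≤ c) :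
    4 ≤ T.entry (r, c') := by
  have hmono := T.row_mono r c c' hc hs hs'
  have hstrict : T.entry (r, c') ≠ 2 := fun h => absurd (hmax _ hs' h) (by simpa using hc)
  omega

/-- The tableau `f_0* T`. -/
def lowerRightmostOne (hn : 2 ≤ n) (hs : ShiftedShape γ (r, c)) (hone : T.entry (r, c) = 2)
    (hno : ∀ rc, ShiftedShape γ rc → T.entry rc ≠ 3)
    (hmax : ∀ rc, ShiftedShape γ rc → T.entry rc = 2 → rc.2 ≤ c) : SSHT n γ :=
  T.updateEntry (v := if r = c then 4 else 3) hs (by split_ifs <;> omega)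
    (by split_ifs <;> omega)
    (fun c' hc hs' => by have := T.row_mono r c' c hc hs' hs; split_ifs <;> omega)
    (fun r' hr hs' => by have := T.col_mono r' r c hr hs' hs; split_ifs <;> omega)
    (fun c' hc hs' => by
      have := T.four_le_entry_right_of_rightmost hs hone hc hs' (hno _ hs') hmax
      split_ifs <;> omega)
    (fun r' hr hs' => by
      have := T.four_le_entry_above_one hs hone hr hs' (hno _ hs')
      have : r' ≤ c := hs'.2.2.1
      split_ifs <;> omega)
    (fun h => by rw [if_pos h])

end RightmostOne

end SSHT

theorem queerLower_wellDefined_general (n : ℕ) (γ : List ℕ)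
    (hn : 2 ≤ n) (T : SSHT n γ)
    (hone : ∃ rc ∈ shapeCells γ, T.entry rc = 2)
    (hnotwo : ¬ ∃ rc ∈ shapeCells γ, T.entry rc = 3) :
    ∃ g, queerLowerFun T = some g ∧ (∃ S : SSHT n γ, S.entry = g) ∧
      wtFun γ g 1 + 1 = wtFun γ T.entry 1 ∧
      wtFun γ g 2 = wtFun γ T.entry 2 + 1 ∧
      (∀ k, k ≠ 1 → k ≠ 2 → wtFun γ g k = wtFun γ T.entry k) := by
  obtain ⟨⟨r, c⟩, hrm, hs, h2, hmax⟩ := T.rightmostOne_spec hone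
  have hno : ∀ rc, ShiftedShape γ rc → T.entry rc ≠ 3 :=
    fun rc hrc h => hnotwo ⟨rc, mem_shapeCells.2 hrc, h⟩
  set v := if r = c then 4 else 3 with hv
  have hql : queerLowerFun T = some (Function.update T.entry (r, c) v) := by
    simp only [queerLowerFun, if_neg hnotwo, hrm, Option.some.injEq]
    exact funext fun rc => (Function.update_apply T.entry (r, c) v rc).symm
  have hwt k : wtFun γ (Function.update T.entry (r, c) v) k +
      (if T.entry (r, c) = 2 * k - 1 ∨ T.entry (r, c) = 2 * k then 1 else 0) =
      wtFun γ T.entry k + (if v = 2 * k - 1 ∨ v = 2 * k then 1 else 0) :=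
    card_filter_update (mem_shapeCells.2 hs) (fun x => x = 2 * k - 1 ∨ x = 2 * k) T.entry v
  simp only [h2] at hwt
  have hv34 : v = 3 ∨ v = 4 := by rw [hv]; split_ifs <;> simp
  refine ⟨_, hql, ⟨T.lowerRightmostOne hn hs h2 hno hmax, rfl⟩, ?_, ?_, fun k hk1 hk2 => ?_⟩
  · have := hwt 1; split_ifs at this <;> omega
  · have := hwt 2; split_ifs at this <;> omega
  · have := hwt k; split_ifs at this <;> omega

/-- If `T ∈ SSHT_n(γ)` has at least one entry `1` (encoded
`2`) and no entry `2'` (encoded `3`), then the queer lowering operator `f_0*`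
applied to `T` yields a semistandard shifted tableau of shape `γ`, and its
weight is obtained from `wt(T)` by decreasing the first part by `1` and
increasing the second part by `1`. -/
theorem queerLower_wellDefined (n : ℕ) (γ : List ℕ) (hγ : StrictPartition γ)
    (hn : 2 ≤ n) (T : SSHT n γ)
    (hone : ∃ rc ∈ shapeCells γ, T.entry rc = 2)
    (hnotwo : ¬ ∃ rc ∈ shapeCells γ, T.entry rc = 3) :
    ∃ g, queerLowerFun T = some g ∧ (∃ S : SSHT n γ, S.entry = g) ∧
      wtFun γ g 1 + 1 = wtFun γ T.entry 1 ∧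
      wtFun γ g 2 = wtFun γ T.entry 2 + 1 ∧
      (∀ k, k ≠ 1 → k ≠ 2 → wtFun γ g k = wtFun γ T.entry k) :=
  queerLower_wellDefined_general n γ hn T hone hnotwo
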